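/- arXiv:gr-qc/0005050 — 10 statements merged into one kernel-verified Lean document; each statement's English description precedes it below -/
import Mathlib

section
/- Every point p on the hyperboloid S = {(t,x,y) ∈ ℝ³ : -t² + x² + y² = a²} (a > 0) lies on exactly two of the ruling lines γ±_θ(t) = a(0, cos θ, sin θ) + a t(1, ∓sin θ, ±cos θ), one from each family, and the tangent directions of these two lines at p span the set of null directions of the Minkowski metric restricted to the tangent plane T_pS. -/
open Real

/-- The ruling line of the hyperboloid: family `ε = ±1`, angle `θ`, parameter `t`. -/
noncomputable def ruling (a ε θ t : ℝ) : ℝ × ℝ × ℝ :=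
  (a * t, a * Real.cos θ - a * t * ε * Real.sin θ, a * Real.sin θ + a * t * ε * Real.cos θ)

/-- The tangent vector of the ruling line with family `ε` and angle `θ`. -/
noncomputable def rulingTangent (a ε θ : ℝ) : ℝ × ℝ × ℝ :=
  (a, -(a * ε * Real.sin θ), a * ε * Real.cos θ)

lemma angle_unique {θ θ' : ℝ} (h : θ ∈ Set.Ico 0 (2*π)) (h' : θ' ∈ Set.Ico 0 (2*π))
    (hc : Real.cos θ = Real.cos θ') (hs : Real.sin θ = Real.sin θ') : θ = θ' := by
  have hexp : Complex.exp (θ * Complex.I) = Complex.exp (θ' * Complex.I) := by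
    rw [Complex.exp_mul_I, Complex.exp_mul_I, ← Complex.ofReal_cos, ← Complex.ofReal_sin,
      ← Complex.ofReal_cos, ← Complex.ofReal_sin, hc, hs]
  rw [Complex.exp_eq_exp_iff_exists_int] at hexp
  obtain ⟨n, hn⟩ := hexp
  rw [Complex.ext_iff] at hn
  simp [Complex.add_im, Complex.mul_im] at hn
  have hn' : θ = θ' + n * (2*π) := hn
  have hπ := Real.pi_pos
  have hz : n = 0 := by
    rcases h with ⟨h1, h2⟩; rcases h' with ⟨h1', h2'⟩
    by_contra hne
    rcases lt_or_gt_of_ne hne with hlt | hgt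
    · have : (n:ℝ) ≤ -1 := by exact_mod_cast (show n ≤ -1 by omega)
      nlinarith
    · have : (1:ℝ) ≤ n := by exact_mod_cast (show 1 ≤ n by omega)
      nlinarith
  rw [hz] at hn'; simpa using hn'

lemma angle_exists (c s : ℝ) (h : c^2 + s^2 = 1) :
    ∃ θ ∈ Set.Ico (0:ℝ) (2*π), Real.cos θ = c ∧ Real.sin θ = s := by
  have hz : (⟨c, s⟩ : ℂ) ≠ 0 := by
    intro hz0
    rw [Complex.ext_iff] at hz0
    simp at hz0
    rw [hz0.1, hz0.2] at h; norm_num at h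
  have habs : ‖(⟨c, s⟩ : ℂ)‖ = 1 := by
    rw [Complex.norm_def, Complex.normSq_mk]
    rw [show c*c + s*s = 1 by nlinarith]
    exact Real.sqrt_one
  have hcos : Real.cos (Complex.arg ⟨c,s⟩) = c := by
    rw [Complex.cos_arg hz, habs]; simp
  have hsin : Real.sin (Complex.arg ⟨c,s⟩) = s := by
    rw [Complex.sin_arg, habs]; simp
  set φ := Complex.arg ⟨c,s⟩ with hφ
  have h1 : -π < φ := Complex.neg_pi_lt_arg _
  have h2 : φ ≤ π := Complex.arg_le_pi _
  have hπ := Real.pi_pos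
  rcases le_or_gt 0 φ with h0 | h0
  · exact ⟨φ, ⟨h0, by linarith⟩, hcos, hsin⟩
  · refine ⟨φ + 2*π, ⟨by linarith, by linarith⟩, ?_, ?_⟩
    · rw [Real.cos_add_two_pi]; exact hcos
    · rw [Real.sin_add_two_pi]; exact hsin

lemma ruling_through (a ε : ℝ) (ha : 0 < a) (hεd : ε = 1 ∨ ε = -1) (p1 p2 p3 : ℝ)
    (hp : -p1^2 + p2^2 + p3^2 = a^2) :
    ∃ θ ∈ Set.Ico (0:ℝ) (2*π),
      Real.cos θ = (a*p2 + ε*p1*p3)/(a^2+p1^2) ∧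
      Real.sin θ = (a*p3 - ε*p1*p2)/(a^2+p1^2) ∧
      ruling a ε θ (p1/a) = (p1, p2, p3) := by
  have ha' : a ≠ 0 := ne_of_gt ha
  have hε : ε^2 = 1 := by rcases hεd with rfl | rfl <;> norm_num
  have hD : a^2 + p1^2 > 0 := by positivity
  have hD' : a^2 + p1^2 ≠ 0 := ne_of_gt hD
  have hcs : ((a*p2 + ε*p1*p3)/(a^2+p1^2))^2 + ((a*p3 - ε*p1*p2)/(a^2+p1^2))^2 = 1 := by
    field_simp
    linear_combination (p1^2*(p2^2+p3^2))*hε + (a^2+p1^2)*hp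
  obtain ⟨θ, hmem, hc, hs⟩ := angle_exists _ _ hcs
  refine ⟨θ, hmem, hc, hs, ?_⟩
  unfold ruling
  rw [hc, hs]
  refine Prod.ext ?_ (Prod.ext ?_ ?_)
  · field_simp
  · show a * _ - a * (p1/a) * ε * _ = p2
    field_simp
    rcases hεd with rfl | rfl <;> ring
  · show a * _ + a * (p1/a) * ε * _ = p3
    field_simp
    rcases hεd with rfl | rfl <;> ring

/-- Every point of the hyperboloid `-t² + x² + y² = a²` lies on exactly one ruling
line from each of the two families, and any nonzero null vector tangent to the
hyperboloid at that point is proportional to the tangent of one of these two lines. -/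
theorem stmt_1 (a : ℝ) (ha : 0 < a) (p : ℝ × ℝ × ℝ)
    (hp : -p.1 ^ 2 + p.2.1 ^ 2 + p.2.2 ^ 2 = a ^ 2) :
    (∀ ε : ℝ, ε = 1 ∨ ε = -1 →
      ∃! θt : ℝ × ℝ, θt.1 ∈ Set.Ico (0 : ℝ) (2 * π) ∧ ruling a ε θt.1 θt.2 = p) ∧
    (∀ ε : ℝ, ε = 1 ∨ ε = -1 → ∀ θ t : ℝ, ruling a ε θ t = p →
      ∀ v : ℝ × ℝ × ℝ, v ≠ 0 →
        -- v is tangent to S at p: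
        (-(2 * p.1 * v.1) + 2 * p.2.1 * v.2.1 + 2 * p.2.2 * v.2.2 = 0) →
        -- v is null:
        (-v.1 ^ 2 + v.2.1 ^ 2 + v.2.2 ^ 2 = 0) →
        -- then v is proportional to the tangent of one of the two ruling lines through p:
        ∃ ε' : ℝ, (ε' = 1 ∨ ε' = -1) ∧ ∃ θ' t' : ℝ, ruling a ε' θ' t' = p ∧
          ∃ c : ℝ, v = c • rulingTangent a ε' θ') := by
  obtain ⟨p1, p2, p3⟩ := p
  simp only at hp
  have ha' : a ≠ 0 := ne_of_gt ha
  have hD : a^2 + p1^2 > 0 := by positivity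
  have hD' : (a^2 + p1^2) ≠ 0 := ne_of_gt hD
  constructor
  · intro ε hεd
    have hε : ε^2 = 1 := by rcases hεd with rfl | rfl <;> norm_num
    obtain ⟨θ, hmem, hc, hs, hr⟩ := ruling_through a ε ha hεd p1 p2 p3 hp
    refine ⟨(θ, p1/a), ⟨hmem, hr⟩, ?_⟩
    rintro ⟨θ', t'⟩ ⟨hmem', hr'⟩
    simp only [ruling, Prod.mk.injEq] at hr'
    obtain ⟨h1, h2, h3⟩ := hr'
    have ht' : t' = p1 / a := by field_simp; linarith
    have h2' : a * Real.cos θ' - p1 * ε * Real.sin θ' = p2 := by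
      linear_combination h2 + ε * Real.sin θ' * h1
    have h3' : a * Real.sin θ' + p1 * ε * Real.cos θ' = p3 := by
      linear_combination h3 - ε * Real.cos θ' * h1
    have hc' : Real.cos θ' = (a*p2 + ε*p1*p3)/(a^2+p1^2) := by
      rw [eq_div_iff hD']
      linear_combination a*h2' + ε*p1*h3' - p1^2*Real.cos θ'*hε
    have hs' : Real.sin θ' = (a*p3 - ε*p1*p2)/(a^2+p1^2) := by
      rw [eq_div_iff hD']
      linear_combination a*h3' - ε*p1*h2' - p1^2*Real.sin θ'*hε
    have : θ' = θ := angle_unique hmem' hmem (by rw [hc, hc']) (by rw [hs, hs'])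
    exact Prod.ext this ht'
  · intro ε hεd θ t hrul v hv hvt hvn
    obtain ⟨v1, v2, v3⟩ := v
    simp only at hvt hvn
    have hv1 : v1 ≠ 0 := by
      intro h0
      apply hv
      rw [h0] at hvn
      have hv2 : v2 = 0 := by nlinarith
      have hv3 : v3 = 0 := by nlinarith
      simp [Prod.ext_iff, h0, hv2, hv3]
    have hkey : (p2*v3 - p3*v2)^2 = a^2*v1^2 := by
      linear_combination (p2^2+p3^2)*hvn + v1^2*hp - ((p2*v2+p3*v3+p1*v1)/2)*hvt
    have hfac : (p2*v3 - p3*v2 - a*v1) * (p2*v3 - p3*v2 + a*v1) = 0 := by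
      linear_combination hkey
    obtain ⟨ε', hε'd, hdef⟩ :
        ∃ ε', (ε' = 1 ∨ ε' = -1) ∧ ε' * (a * v1) = p2*v3 - p3*v2 := by
      rcases mul_eq_zero.mp hfac with h | h
      · exact ⟨1, Or.inl rfl, by linarith⟩
      · exact ⟨-1, Or.inr rfl, by linarith⟩
    have hε'sq : ε'^2 = 1 := by rcases hε'd with rfl | rfl <;> norm_num
    obtain ⟨θ', hmem', hc', hs', hr'⟩ := ruling_through a ε' ha hε'd p1 p2 p3 hp
    refine ⟨ε', hε'd, θ', p1/a, hr', v1/a, ?_⟩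
    have hg2 : (a^2+p1^2) * v2 = v1*p1*p2 - ε'*a*v1*p3 := by
      linear_combination p3*hdef + (p2/2)*hvt - v2*hp
    have hg3 : (a^2+p1^2) * v3 = v1*p1*p3 + ε'*a*v1*p2 := by
      linear_combination (-p2)*hdef + (p3/2)*hvt - v3*hp
    rw [rulingTangent, hc', hs']
    refine Prod.ext ?_ (Prod.ext ?_ ?_)
    · show v1 = (v1/a) * a
      field_simp
    · show v2 = (v1/a) * (-(a * ε' * ((a*p3 - ε'*p1*p2)/(a^2+p1^2))))
      field_simp
      linear_combination hg2 - (p1*v1*p2)*hε'sq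
    · show v3 = (v1/a) * (a * ε' * ((a*p2 + ε'*p1*p3)/(a^2+p1^2)))
      field_simp
      linear_combination hg3 - (p1*v1*p3)*hε'sq
end

section
/- Let σ be a symmetric bilinear form on a 3-dimensional real vector space V equipped with a Lorentzian inner product of signature (-,+,+). If σ is trace-free with respect to the inner product and σ(k,k) = 0 for every null vector k ∈ V, then σ = 0. -/
open Real

/-- If a symmetric bilinear form `σ` on a 3-dimensional Lorentzian vector space
(signature (-,+,+)) is trace-free and vanishes on every null vector, then `σ = 0`. -/
theorem stmt_4 {V : Type*} [AddCommGroup V] [Module ℝ V]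
    (hdim : Module.finrank ℝ V = 3)
    (h σ : LinearMap.BilinForm ℝ V)
    (hsymm : ∀ u v : V, h u v = h v u)
    (σsymm : ∀ u v : V, σ u v = σ v u)
    -- an orthonormal basis with signature (-,+,+):
    (e : Module.Basis (Fin 3) ℝ V)
    (he : ∀ i j : Fin 3, h (e i) (e j) =
      if i = j then (if i = 0 then -1 else 1) else 0)
    -- σ is trace-free with respect to h:
    (htr : -σ (e 0) (e 0) + σ (e 1) (e 1) + σ (e 2) (e 2) = 0)
    -- σ vanishes on null vectors:
    (hnull : ∀ k : V, h k k = 0 → σ k k = 0) :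
    σ = 0 := by
  have key : ∀ a b : ℝ, a ^ 2 + b ^ 2 = 1 →
      σ (e 0) (e 0) + a ^ 2 * σ (e 1) (e 1) + b ^ 2 * σ (e 2) (e 2)
        + 2 * a * σ (e 0) (e 1) + 2 * b * σ (e 0) (e 2)
        + 2 * (a * b) * σ (e 1) (e 2) = 0 := by
    intro a b hab
    have hk : h (e 0 + a • e 1 + b • e 2) (e 0 + a • e 1 + b • e 2) = 0 := by
      simp [map_add, map_smul, he]
      nlinarith [hab]
    have := hnull _ hk
    simp only [map_add, map_smul, smul_eq_mul, LinearMap.add_apply, LinearMap.smul_apply] at this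
    have s01 := σsymm (e 0) (e 1)
    have s02 := σsymm (e 0) (e 2)
    have s12 := σsymm (e 1) (e 2)
    rw [← s01, ← s02, ← s12] at this
    linear_combination this
  have k1 := key 1 0 (by norm_num)
  have k2 := key (-1) 0 (by norm_num)
  have k3 := key 0 1 (by norm_num)
  have k4 := key 0 (-1) (by norm_num)
  have k5 := key (Real.sqrt 2 / 2) (Real.sqrt 2 / 2) (by
    have : Real.sqrt 2 ^ 2 = 2 := Real.sq_sqrt (by norm_num)
    nlinarith)
  have hs : Real.sqrt 2 > 0 := Real.sqrt_pos.mpr (by norm_num)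
  have hs2 : Real.sqrt 2 ^ 2 = 2 := Real.sq_sqrt (by norm_num)
  have h01 : σ (e 0) (e 1) = 0 := by linarith
  have h02 : σ (e 0) (e 2) = 0 := by linarith
  have h00 : σ (e 0) (e 0) = 0 := by linarith
  have h11 : σ (e 1) (e 1) = 0 := by linarith
  have h22 : σ (e 2) (e 2) = 0 := by linarith
  have h12 : σ (e 1) (e 2) = 0 := by nlinarith [k5]
  have h10 : σ (e 1) (e 0) = 0 := (σsymm (e 1) (e 0)).trans h01
  have h20 : σ (e 2) (e 0) = 0 := (σsymm (e 2) (e 0)).trans h02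
  have h21 : σ (e 2) (e 1) = 0 := (σsymm (e 2) (e 1)).trans h12
  apply Module.Basis.ext e
  intro i
  apply Module.Basis.ext e
  intro j
  show σ (e i) (e j) = (0 : LinearMap.BilinForm ℝ V) (e i) (e j)
  fin_cases i <;> fin_cases j <;>
    simp only [LinearMap.zero_apply] <;>
    first
      | exact h00 | exact h01 | exact h02 | exact h10 | exact h11
      | exact h12 | exact h20 | exact h21 | exact h22
end

section
/- For the Janis–Newman–Winicour metric with parameters b > 0 and ν ∈ [0,1], where g₀₀ = -(1 - b/r)^ν and g_{θθ} = (1 - b/r)^{1-ν} r², the photon sphere equation g₀₀ ∂_r g_{θθ} = g_{θθ} ∂_r g₀₀ on the region r > b has a solution if and only if ν > 1/2, in which case the unique solution is r = b(2ν + 1)/2. -/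
open Real

/-- Janis–Newman–Winicour metric (`b > 0`, `ν ∈ [0,1]`), with
`g₀₀ = -(1 - b/r)^ν` and `g_θθ = (1 - b/r)^{1-ν} r²` on `r > b`:
the photon sphere equation `g₀₀ ∂_r g_θθ = g_θθ ∂_r g₀₀` has a solution iff
`ν > 1/2`, in which case the unique solution is `r = b(2ν + 1)/2`. -/
theorem stmt_10 (b ν : ℝ) (hb : 0 < b) (hν : ν ∈ Set.Icc (0 : ℝ) 1) :
    ((∃ r : ℝ, b < r ∧
      (-(1 - b / r) ^ ν) * deriv (fun s : ℝ => (1 - b / s) ^ (1 - ν) * s ^ 2) r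
        = (1 - b / r) ^ (1 - ν) * r ^ 2 * deriv (fun s : ℝ => -(1 - b / s) ^ ν) r)
      ↔ 1 / 2 < ν) ∧
    (∀ r : ℝ, b < r →
      ((-(1 - b / r) ^ ν) * deriv (fun s : ℝ => (1 - b / s) ^ (1 - ν) * s ^ 2) r
        = (1 - b / r) ^ (1 - ν) * r ^ 2 * deriv (fun s : ℝ => -(1 - b / s) ^ ν) r)
      → r = b * (2 * ν + 1) / 2) := by
  have key : ∀ r : ℝ, b < r →
      (((-(1 - b / r) ^ ν) * deriv (fun s : ℝ => (1 - b / s) ^ (1 - ν) * s ^ 2) r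
        = (1 - b / r) ^ (1 - ν) * r ^ 2 * deriv (fun s : ℝ => -(1 - b / s) ^ ν) r)
      ↔ r = b * (2 * ν + 1) / 2) := by
    intro r hr
    have hr0 : (0:ℝ) < r := hb.trans hr
    have hrne : r ≠ 0 := hr0.ne'
    have hx : 0 < 1 - b / r := by
      rw [sub_pos, div_lt_one hr0]; exact hr
    have hF : HasDerivAt (fun s : ℝ => 1 - b / s) (b / r ^ 2) r := by
      have h1 : HasDerivAt (fun s : ℝ => b * s⁻¹) (b * (-(r ^ 2)⁻¹)) r :=
        (hasDerivAt_inv hrne).const_mul b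
      have h2 := (hasDerivAt_const r (1:ℝ)).sub h1
      simp only [div_eq_mul_inv]
      refine h2.congr_deriv ?_
      ring
    have hd1 : HasDerivAt (fun s : ℝ => (1 - b / s) ^ (1 - ν) * s ^ 2)
        ((b / r ^ 2 * (1 - ν) * (1 - b / r) ^ (1 - ν - 1)) * r ^ 2
          + (1 - b / r) ^ (1 - ν) * (2 * r)) r := by
      have := (hF.rpow_const (p := 1 - ν) (Or.inl hx.ne')).mul (hasDerivAt_pow 2 r)
      simpa [Pi.mul_def] using this
    have hd2 : HasDerivAt (fun s : ℝ => -(1 - b / s) ^ ν)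
        (-(b / r ^ 2 * ν * (1 - b / r) ^ (ν - 1))) r :=
      (hF.rpow_const (p := ν) (Or.inl hx.ne')).neg
    set x := 1 - b / r with hxdef
    have hA : x ^ ν * x ^ (1 - ν - 1) = 1 := by
      rw [← Real.rpow_add hx, show ν + (1 - ν - 1) = 0 by ring, Real.rpow_zero]
    have hB : x ^ ν * x ^ (1 - ν) = x := by
      rw [← Real.rpow_add hx, show ν + (1 - ν) = 1 by ring, Real.rpow_one]
    have hC : x ^ (1 - ν) * x ^ (ν - 1) = 1 := by
      rw [← Real.rpow_add hx, show (1 - ν) + (ν - 1) = 0 by ring, Real.rpow_zero]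
    have hr2 : b / r ^ 2 * r ^ 2 = b := by field_simp
    have hL : -x ^ ν * ((b / r ^ 2 * (1 - ν) * x ^ (1 - ν - 1)) * r ^ 2
        + x ^ (1 - ν) * (2 * r)) = -((1 - ν) * b) - 2 * r * x := by
      linear_combination (-(1 - ν) * (b / r ^ 2) * r ^ 2) * hA - (1 - ν) * hr2
        - (2 * r) * hB
    have hR : x ^ (1 - ν) * r ^ 2 * (-(b / r ^ 2 * ν * x ^ (ν - 1))) = -(ν * b) := by
      linear_combination (-ν * (b / r ^ 2) * r ^ 2) * hC - ν * hr2
    rw [hd1.deriv, hd2.deriv, hL, hR]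
    have hx2 : 2 * r * x = 2 * r - 2 * b := by
      rw [hxdef]; field_simp
    constructor
    · intro h
      linear_combination (-1/2 : ℝ) * h + (-1/2 : ℝ) * hx2
    · intro h
      linear_combination (-1 : ℝ) * hx2 - 2 * h
  refine ⟨⟨?_, ?_⟩, fun r hr heq => (key r hr).mp heq⟩
  · rintro ⟨r, hr, heq⟩
    have := (key r hr).mp heq
    rw [this] at hr
    nlinarith
  · intro h
    refine ⟨b * (2 * ν + 1) / 2, by nlinarith, (key _ (by nlinarith)).mpr rfl⟩
end

section
/- For the charged dilaton metric with β² = 1, r₊ = 2m, r₋ = e²/m (m > 0), the photon sphere equation reduces to the quadratic whose roots are r±/m = ((6 + (e/m)²) ± √(36 + (e/m)⁴ - 20(e/m)²))/4. The roots are real iff (e/m)² ≤ 2 or (e/m)² ≥ 18; if 0 ≤ (e/m)² < 2 then r₋_ps ≤ r₋ < r₊ < r₊_ps, and if (e/m)² ≥ 18 then r₊_ps < r₋. -/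
open Real

/-- Charged dilaton (Horne–Horowitz) metric with `β² = 1`, `r₊ = 2m`, `r₋ = e²/m`,
`m > 0`. With `q = (e/m)²`, the photon-sphere quadratic in `x = r/m` is
`2x² - (6+q)x + 4q = 0`, with roots `x± = ((6+q) ± √(36 + q² - 20q))/4`.
The roots are real iff `q ≤ 2` or `q ≥ 18`; if `0 ≤ q < 2` then
`x₋ ≤ q < 2 < x₊` (i.e. `r⁻_ps ≤ r₋ < r₊ < r⁺_ps`), and if `q ≥ 18` then
`x₊ < q` (i.e. `r⁺_ps < r₋`). -/
theorem stmt_11 (m e : ℝ) (hm : 0 < m) :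
    let q : ℝ := (e / m) ^ 2
    let xp : ℝ := ((6 + q) + Real.sqrt (36 + q ^ 2 - 20 * q)) / 4
    let xm : ℝ := ((6 + q) - Real.sqrt (36 + q ^ 2 - 20 * q)) / 4
    (0 ≤ 36 + q ^ 2 - 20 * q ↔ (q ≤ 2 ∨ 18 ≤ q)) ∧
    (0 ≤ 36 + q ^ 2 - 20 * q →
      (2 * xp ^ 2 - (6 + q) * xp + 4 * q = 0 ∧ 2 * xm ^ 2 - (6 + q) * xm + 4 * q = 0)) ∧
    (q < 2 → xm ≤ q ∧ q < 2 ∧ 2 < xp) ∧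
    (18 ≤ q → xp < q) := by
  intro q xp xm
  have hq0 : 0 ≤ q := sq_nonneg _
  refine ⟨?_, ?_, ?_, ?_⟩
  · constructor
    · intro h
      by_contra hc
      push_neg at hc
      nlinarith [hc.1, hc.2]
    · rintro (h | h) <;> nlinarith
  · intro hD
    have hs : Real.sqrt (36 + q ^ 2 - 20 * q) ^ 2 = 36 + q ^ 2 - 20 * q :=
      Real.sq_sqrt hD
    constructor
    · simp only [xp]
      nlinarith [hs]
    · simp only [xm]
      nlinarith [hs]
  · intro hq2
    have hD : 0 ≤ 36 + q ^ 2 - 20 * q := by nlinarith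
    have hs : Real.sqrt (36 + q ^ 2 - 20 * q) ^ 2 = 36 + q ^ 2 - 20 * q :=
      Real.sq_sqrt hD
    have hsn : 0 ≤ Real.sqrt (36 + q ^ 2 - 20 * q) := Real.sqrt_nonneg _
    refine ⟨?_, hq2, ?_⟩
    · -- xm ≤ q ⇔ 6 - 3q ≤ s
      have h1 : 6 - 3 * q ≤ Real.sqrt (36 + q ^ 2 - 20 * q) := by
        have : (6 - 3 * q) ^ 2 ≤ 36 + q ^ 2 - 20 * q := by nlinarith
        nlinarith [hs, hsn, sq_nonneg (Real.sqrt (36 + q ^ 2 - 20 * q) - (6 - 3 * q))]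
      show ((6 + q) - Real.sqrt (36 + q ^ 2 - 20 * q)) / 4 ≤ q
      linarith
    · have h2 : 2 - q < Real.sqrt (36 + q ^ 2 - 20 * q) := by
        have h3 : (2 - q) ^ 2 < 36 + q ^ 2 - 20 * q := by nlinarith
        nlinarith [hs, hsn]
      show (2 : ℝ) < ((6 + q) + Real.sqrt (36 + q ^ 2 - 20 * q)) / 4
      linarith
  · intro hq18
    have hD : 0 ≤ 36 + q ^ 2 - 20 * q := by nlinarith
    have hs : Real.sqrt (36 + q ^ 2 - 20 * q) ^ 2 = 36 + q ^ 2 - 20 * q :=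
      Real.sq_sqrt hD
    have hsn : 0 ≤ Real.sqrt (36 + q ^ 2 - 20 * q) := Real.sqrt_nonneg _
    have h1 : Real.sqrt (36 + q ^ 2 - 20 * q) < 3 * q - 6 := by
      have : 36 + q ^ 2 - 20 * q < (3 * q - 6) ^ 2 := by nlinarith
      nlinarith [hs, hsn]
    show ((6 + q) + Real.sqrt (36 + q ^ 2 - 20 * q)) / 4 < q
    linarith
end

section
/- Under hypotheses (i)–(iii) of the photon-surface existence theorem (ρ, p₁ bounded and nonnegative, 2m(r) < r), if lim_{r↘r₀} (1 - 2m(r)/r) e^{μ(r)/2} = 0 then lim_{r↘r₀} (1 - 2m(r)/r) = 0. -/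
open Real Filter

/-- `f` is piecewise `C²` on `s`: outside a locally finite exceptional set of
break points, `f` is twice continuously differentiable. -/
def PiecewiseC2On (f : ℝ → ℝ) (s : Set ℝ) : Prop :=
  ∃ P : Set ℝ, (∀ x ∈ s, ∃ ε > 0, (P ∩ Set.Ioo (x - ε) (x + ε)).Finite) ∧
    ∀ x ∈ s \ P, ContDiffAt ℝ 2 f x

/-- If `f` is continuous on `[a,b]` and differentiable with nonnegative derivative
on `(a,b)` except on a finite set, then `f a ≤ f b`. -/
lemma aux_le_finset (f : ℝ → ℝ) (Q : Finset ℝ) :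
    ∀ a b : ℝ, a ≤ b → ContinuousOn f (Set.Icc a b) →
      (∀ x ∈ Set.Ioo a b, x ∉ Q → DifferentiableAt ℝ f x ∧ 0 ≤ deriv f x) →
      f a ≤ f b := by
  induction Q using Finset.induction_on with
  | empty =>
    intro a b hab hc hd
    have hmono : MonotoneOn f (Set.Icc a b) := by
      apply monotoneOn_of_deriv_nonneg (convex_Icc a b) hc
      · rw [interior_Icc]
        exact fun x hx => (hd x hx (by simp)).1.differentiableWithinAt
      · rw [interior_Icc]
        exact fun x hx => (hd x hx (by simp)).2
    exact hmono (Set.left_mem_Icc.2 hab) (Set.right_mem_Icc.2 hab) hab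
  | @insert c Q hcQ ih =>
    intro a b hab hc hd
    by_cases hcm : c ∈ Set.Ioo a b
    · have h1 : f a ≤ f c := by
        refine ih a c hcm.1.le (hc.mono (Set.Icc_subset_Icc_right hcm.2.le)) ?_
        intro x hx hxQ
        exact hd x ⟨hx.1, hx.2.trans hcm.2⟩ (by simp [hxQ, hx.2.ne])
      have h2 : f c ≤ f b := by
        refine ih c b hcm.2.le (hc.mono (Set.Icc_subset_Icc_left hcm.1.le)) ?_
        intro x hx hxQ
        exact hd x ⟨hcm.1.trans hx.1, hx.2⟩ (by simp [hxQ, hx.1.ne'])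
      exact h1.trans h2
    · refine ih a b hab hc ?_
      intro x hx hxQ
      refine hd x hx ?_
      simp only [Finset.mem_insert, not_or]
      exact ⟨fun h => hcm (h ▸ hx), hxQ⟩

/-- Version with a locally-finite exceptional set. -/
lemma aux_le_locfin (f : ℝ → ℝ) (P : Set ℝ) {a b : ℝ} (hab : a ≤ b)
    (hloc : ∀ x ∈ Set.Icc a b, ∃ ε > 0, (P ∩ Set.Ioo (x - ε) (x + ε)).Finite)
    (hc : ContinuousOn f (Set.Icc a b))
    (hd : ∀ x ∈ Set.Ioo a b, x ∉ P → DifferentiableAt ℝ f x ∧ 0 ≤ deriv f x) :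
    f a ≤ f b := by
  choose! ε hε hfin using hloc
  obtain ⟨t, hts, htcover⟩ := (isCompact_Icc (a := a) (b := b)).elim_nhds_subcover
    (fun x => Set.Ioo (x - ε x) (x + ε x))
    (fun x hx => Ioo_mem_nhds (by linarith [hε x hx]) (by linarith [hε x hx]))
  have hPfin : (P ∩ Set.Icc a b).Finite := by
    have hsub : P ∩ Set.Icc a b ⊆ ⋃ x ∈ t, P ∩ Set.Ioo (x - ε x) (x + ε x) := by
      intro y hy
      rcases Set.mem_iUnion₂.1 (htcover hy.2) with ⟨x, hxt, hyx⟩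
      exact Set.mem_biUnion hxt ⟨hy.1, hyx⟩
    exact (t.finite_toSet.biUnion fun x hx => hfin x (hts x hx)).subset hsub
  refine aux_le_finset f hPfin.toFinset a b hab hc ?_
  intro x hx hxQ
  refine hd x hx fun hxP => hxQ ?_
  simp only [Set.Finite.mem_toFinset]
  exact ⟨hxP, ⟨hx.1.le, hx.2.le⟩⟩

/-- Under the hypotheses of the photon-surface existence theorem (`ρ`, `p₁` bounded
and nonnegative, `2m(r) < r`), if `(1 - 2m(r)/r)e^{μ(r)/2} → 0` as `r ↘ r₀`, then
`(1 - 2m(r)/r) → 0` as `r ↘ r₀`. -/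
theorem stmt_13 (r₀ : ℝ) (hr₀ : 0 < r₀) (m μ ρ p₁ : ℝ → ℝ)
    (hmc : ContinuousOn m (Set.Ioi r₀)) (hμc : ContinuousOn μ (Set.Ioi r₀))
    (hm2 : PiecewiseC2On m (Set.Ioi r₀)) (hμ2 : PiecewiseC2On μ (Set.Ioi r₀))
    (hρ : ∀ r ∈ Set.Ioi r₀, ρ r = deriv m r / (4 * π * r ^ 2))
    (hp₁ : ∀ r ∈ Set.Ioi r₀,
      8 * π * p₁ r = ((r - 2 * m r) * deriv μ r - 2 * deriv m r) / r ^ 2)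
    (hbdd : ∃ C : ℝ, ∀ r ∈ Set.Ioi r₀, |ρ r| ≤ C ∧ |p₁ r| ≤ C)
    (hρpos : ∀ r ∈ Set.Ioi r₀, 0 ≤ ρ r) (hppos : ∀ r ∈ Set.Ioi r₀, 0 ≤ p₁ r)
    (hnbh : ∀ r ∈ Set.Ioi r₀, 2 * m r < r)
    (hmots : Tendsto (fun r => (1 - 2 * m r / r) * Real.exp (μ r / 2))
      (nhdsWithin r₀ (Set.Ioi r₀)) (nhds 0)) :
    Tendsto (fun r => 1 - 2 * m r / r) (nhdsWithin r₀ (Set.Ioi r₀)) (nhds 0) := by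
  obtain ⟨Pm, hPmloc, hPm⟩ := hm2
  obtain ⟨Pμ, hPμloc, hPμ⟩ := hμ2
  obtain ⟨C, hC⟩ := hbdd
  have hπ : (0:ℝ) < π := Real.pi_pos
  have hrpos : ∀ r ∈ Set.Ioi r₀, (0:ℝ) < r := fun r hr => hr₀.trans hr
  have hm' : ∀ r ∈ Set.Ioi r₀, deriv m r = 4 * π * r ^ 2 * ρ r := by
    intro r hr
    have hrp : (0:ℝ) < r := hrpos r hr
    have h := hρ r hr
    have hne : (4 * π * r ^ 2) ≠ 0 := by positivity
    field_simp at h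
    linarith
  have hm'0 : ∀ r ∈ Set.Ioi r₀, 0 ≤ deriv m r := by
    intro r hr
    rw [hm' r hr]
    have h1 := hρpos r hr
    have hrp := hrpos r hr
    positivity
  have hfpos : ∀ r ∈ Set.Ioi r₀, (0:ℝ) < 1 - 2 * m r / r := by
    intro r hr
    have hrp := hrpos r hr
    have := hnbh r hr
    rw [sub_pos, div_lt_one hrp]
    exact this
  have hC0 : (0:ℝ) ≤ C := by
    have h := (hC (r₀ + 1) (by simp only [Set.mem_Ioi]; linarith)).1
    exact (abs_nonneg _).trans h
  -- m is monotone on (r₀, ∞)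
  have hmono : ∀ a ∈ Set.Ioi r₀, ∀ b ∈ Set.Ioi r₀, a ≤ b → m a ≤ m b := by
    intro a ha b hb hab
    have hIcc : Set.Icc a b ⊆ Set.Ioi r₀ := fun x hx => lt_of_lt_of_le ha hx.1
    refine aux_le_locfin m Pm hab (fun x hx => hPmloc x (hIcc hx)) (hmc.mono hIcc) ?_
    intro x hx hxP
    have hxI : x ∈ Set.Ioi r₀ := hIcc ⟨hx.1.le, hx.2.le⟩
    exact ⟨(hPm x ⟨hxI, hxP⟩).differentiableAt (by norm_num), hm'0 x hxI⟩
  -- key contradiction lemma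
  have HA : ∀ δ : ℝ, 0 < δ →
      (∀ᶠ r in nhdsWithin r₀ (Set.Ioi r₀), δ ≤ 1 - 2 * m r / r) → False := by
    intro δ hδ hev
    rw [eventually_iff, mem_nhdsGT_iff_exists_Ioo_subset] at hev
    obtain ⟨u, hu, husub⟩ := hev
    set r₁ := min u (r₀ + 1) with hr₁def
    have hr₁ : r₀ < r₁ := lt_min hu (by linarith)
    have hr₁le : r₁ ≤ r₀ + 1 := min_le_right _ _
    have hδle : ∀ r ∈ Set.Ioo r₀ r₁, δ ≤ 1 - 2 * m r / r := fun r hr =>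
      husub ⟨hr.1, lt_of_lt_of_le hr.2 (min_le_left _ _)⟩
    set K := 16 * π * C * (r₀ + 1) ^ 2 / (r₀ * δ) with hK
    have hK0 : 0 ≤ K := by positivity
    have hden : ∀ r ∈ Set.Ioo r₀ r₁, r₀ * δ ≤ r - 2 * m r := by
      intro r hr
      have hrp : (0:ℝ) < r := hr₀.trans hr.1
      have h1 := hδle r hr
      have h2 : r * (1 - 2 * m r / r) = r - 2 * m r := by field_simp
      nlinarith [mul_le_mul_of_nonneg_left h1 hrp.le,
        mul_le_mul_of_nonneg_right hr.1.le hδ.le]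
    have hμ' : ∀ r ∈ Set.Ioo r₀ r₁, 0 ≤ deriv μ r ∧ deriv μ r ≤ K := by
      intro r hr
      have hrI : r ∈ Set.Ioi r₀ := hr.1
      have hrp : (0:ℝ) < r := hr₀.trans hr.1
      have hd := hden r hr
      have hdpos : (0:ℝ) < r - 2 * m r := lt_of_lt_of_le (by positivity) hd
      have h1 : 8 * π * p₁ r * r ^ 2 = (r - 2 * m r) * deriv μ r - 2 * deriv m r := by
        have h := hp₁ r hrI
        have hr2 : (r:ℝ) ^ 2 ≠ 0 := by positivity
        field_simp at h
        linarith
      have h2 := hm' r hrI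
      have heq : (r - 2 * m r) * deriv μ r = 8 * π * r ^ 2 * (p₁ r + ρ r) := by
        nlinarith [h1, h2]
      have hnum0 : 0 ≤ 8 * π * r ^ 2 * (p₁ r + ρ r) := by
        have := hppos r hrI
        have := hρpos r hrI
        positivity
      have hμ'0 : 0 ≤ deriv μ r := by
        by_contra hneg
        push_neg at hneg
        nlinarith
      refine ⟨hμ'0, ?_⟩
      have hnumle : 8 * π * r ^ 2 * (p₁ r + ρ r) ≤ 16 * π * C * (r₀ + 1) ^ 2 := by
        have hp1 : p₁ r ≤ C := (le_abs_self _).trans (hC r hrI).2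
        have hρ1 : ρ r ≤ C := (le_abs_self _).trans (hC r hrI).1
        have hrle : r ≤ r₀ + 1 := hr.2.le.trans hr₁le
        have hp0 := hppos r hrI
        have hρ0 := hρpos r hrI
        have hr2 : r ^ 2 ≤ (r₀ + 1) ^ 2 := by nlinarith
        have hsum : p₁ r + ρ r ≤ 2 * C := by linarith
        calc 8 * π * r ^ 2 * (p₁ r + ρ r)
            ≤ 8 * π * (r₀ + 1) ^ 2 * (p₁ r + ρ r) := by
              have h1 : (0:ℝ) ≤ p₁ r + ρ r := by linarith
              have h2 : 8 * π * r ^ 2 ≤ 8 * π * (r₀ + 1) ^ 2 := by nlinarith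
              exact mul_le_mul_of_nonneg_right h2 h1
          _ ≤ 8 * π * (r₀ + 1) ^ 2 * (2 * C) :=
              mul_le_mul_of_nonneg_left hsum (by positivity)
          _ = 16 * π * C * (r₀ + 1) ^ 2 := by ring
      have hKd : K * (r₀ * δ) = 16 * π * C * (r₀ + 1) ^ 2 := by
        rw [hK]
        field_simp
      have hmain : deriv μ r * (r₀ * δ) ≤ K * (r₀ * δ) := by
        calc deriv μ r * (r₀ * δ) ≤ deriv μ r * (r - 2 * m r) :=
              mul_le_mul_of_nonneg_left hd hμ'0
          _ = 8 * π * r ^ 2 * (p₁ r + ρ r) := by linarith [heq, mul_comm (deriv μ r) (r - 2 * m r)]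
          _ ≤ 16 * π * C * (r₀ + 1) ^ 2 := hnumle
          _ = K * (r₀ * δ) := hKd.symm
      exact le_of_mul_le_mul_right hmain (by positivity)
    set t := (r₀ + r₁) / 2 with ht
    have htmem : t ∈ Set.Ioo r₀ r₁ := ⟨by rw [ht]; linarith, by rw [ht]; linarith⟩
    have hμlow : ∀ r ∈ Set.Ioo r₀ t, μ t - K * (t - r₀) ≤ μ r := by
      intro r hr
      have hIcc : Set.Icc r t ⊆ Set.Ioi r₀ := fun x hx => lt_of_lt_of_le hr.1 hx.1
      have hle : K * r - μ r ≤ K * t - μ t := by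
        refine aux_le_locfin (fun x => K * x - μ x) Pμ hr.2.le
          (fun x hx => hPμloc x (hIcc hx))
          ((continuousOn_const.mul continuousOn_id).sub (hμc.mono hIcc)) ?_
        intro x hx hxP
        have hxI : x ∈ Set.Ioi r₀ := hIcc ⟨hx.1.le, hx.2.le⟩
        have hdiff : DifferentiableAt ℝ μ x := (hPμ x ⟨hxI, hxP⟩).differentiableAt (by norm_num)
        have hdK : DifferentiableAt ℝ (fun x : ℝ => K * x) x :=
          (differentiableAt_const _).mul differentiableAt_id
        refine ⟨hdK.sub hdiff, ?_⟩
        rw [deriv_fun_sub hdK hdiff, deriv_const_mul _ differentiableAt_id, deriv_id'']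
        have hx' : x ∈ Set.Ioo r₀ r₁ := ⟨hxI, hx.2.trans htmem.2⟩
        have := (hμ' x hx').2
        simp only [mul_one]
        linarith
      nlinarith [hK0, hr.1.le, mul_le_mul_of_nonneg_left hr.1.le hK0]
    set ε := δ * Real.exp ((μ t - K * (t - r₀)) / 2) with hεdef
    have hεpos : 0 < ε := by positivity
    have hev2 : ∀ᶠ r in nhdsWithin r₀ (Set.Ioi r₀),
        (1 - 2 * m r / r) * Real.exp (μ r / 2) < ε := hmots (Iio_mem_nhds hεpos)
    have hev3 : ∀ᶠ r in nhdsWithin r₀ (Set.Ioi r₀), r ∈ Set.Ioo r₀ t :=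
      eventually_of_mem (Ioo_mem_nhdsGT htmem.1) fun x hx => hx
    obtain ⟨r, hrlt, hrmem⟩ := (hev2.and hev3).exists
    have h1 : δ ≤ 1 - 2 * m r / r := hδle r ⟨hrmem.1, hrmem.2.trans htmem.2⟩
    have h2 : Real.exp ((μ t - K * (t - r₀)) / 2) ≤ Real.exp (μ r / 2) :=
      Real.exp_le_exp.2 (by linarith [hμlow r hrmem])
    have hlb : ε ≤ (1 - 2 * m r / r) * Real.exp (μ r / 2) :=
      mul_le_mul h1 h2 (Real.exp_pos _).le (by linarith)
    linarith
  -- dichotomy on boundedness of m from below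
  by_cases hbb : BddBelow (m '' Set.Ioo r₀ (r₀ + 1))
  · have hmonoOn : MonotoneOn m (Set.Ioo r₀ (r₀ + 1)) := fun a ha b hb hab =>
      hmono a ha.1 b hb.1 hab
    have hne : (Set.Ioo r₀ (r₀ + 1)).Nonempty := ⟨r₀ + 1/2, by constructor <;> linarith⟩
    have hmt := hmonoOn.tendsto_nhdsWithin_Ioo_right hne hbb
    set L := sInf (m '' Set.Ioo r₀ (r₀ + 1)) with hL
    have hft : Tendsto (fun r => 1 - 2 * m r / r) (nhdsWithin r₀ (Set.Ioi r₀))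
        (nhds (1 - 2 * L / r₀)) := by
      have hid : Tendsto (fun r : ℝ => r) (nhdsWithin r₀ (Set.Ioi r₀)) (nhds r₀) :=
        tendsto_id.mono_left nhdsWithin_le_nhds
      exact tendsto_const_nhds.sub (((tendsto_const_nhds.mul hmt).div hid (ne_of_gt hr₀)))
    have hc0 : 0 ≤ 1 - 2 * L / r₀ := by
      refine ge_of_tendsto hft ?_
      exact eventually_of_mem self_mem_nhdsWithin fun r hr => (hfpos r hr).le
    rcases eq_or_lt_of_le hc0 with heq | hlt
    · rwa [← heq] at hft
    · exact ((HA ((1 - 2 * L / r₀) / 2) (by linarith)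
        ((hft.eventually (eventually_gt_nhds (by linarith))).mono fun x hx => hx.le))).elim
  · rw [not_bddBelow_iff] at hbb
    obtain ⟨y, hy, hylt⟩ := hbb 0
    obtain ⟨r'', hr''mem, rfl⟩ := hy
    have hev : ∀ᶠ r in nhdsWithin r₀ (Set.Ioi r₀), (1:ℝ) ≤ 1 - 2 * m r / r := by
      refine eventually_of_mem (Ioo_mem_nhdsGT hr''mem.1) ?_
      intro r hr
      have hmr : m r ≤ m r'' := hmono r hr.1 r'' hr''mem.1 hr.2.le
      have hrp : (0:ℝ) < r := hr₀.trans hr.1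
      have hneg : m r < 0 := lt_of_le_of_lt hmr hylt
      have hdiv : 2 * m r / r ≤ 0 := div_nonpos_of_nonpos_of_nonneg (by linarith) hrp.le
      linarith
    exact (HA 1 one_pos hev).elim
end

section
/- Suppose m, ρ, p₁ : (0,∞) → ℝ satisfy: ρ non-increasing and bounded, m'(r) = 4πr²ρ(r), lim_{r→0} m(r) = 0, 4m(r) < r for all r > 0, and p₁(r) ≤ ρ(r)/3 for all r > 0. Then 1 - 3m(r)/r - 4πr²p₁(r) > 0 for all r > 0 (hence there are no SO(3)×ℝ-invariant timelike photon surfaces). -/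
open Real Filter

/-- No photon spheres without a black hole or sufficient matter: if `ρ` is
non-increasing and bounded, `m' = 4πr²ρ`, `m → 0` at the centre, `4m(r) < r` and
`p₁ ≤ ρ/3`, then `1 - 3m(r)/r - 4πr²p₁(r) > 0` for all `r > 0` (hence there are
no SO(3)×ℝ-invariant timelike photon surfaces). -/
theorem stmt_15 (m ρ p₁ : ℝ → ℝ)
    (hmono : AntitoneOn ρ (Set.Ioi 0))
    (hbdd : ∃ C : ℝ, ∀ r ∈ Set.Ioi (0 : ℝ), |ρ r| ≤ C)
    (hderiv : ∀ r ∈ Set.Ioi (0 : ℝ), HasDerivAt m (4 * π * r ^ 2 * ρ r) r)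
    (hlim : Tendsto m (nhdsWithin 0 (Set.Ioi 0)) (nhds 0))
    (hnbh : ∀ r ∈ Set.Ioi (0 : ℝ), 4 * m r < r)
    (hp : ∀ r ∈ Set.Ioi (0 : ℝ), p₁ r ≤ ρ r / 3) :
    ∀ r ∈ Set.Ioi (0 : ℝ), 0 < 1 - 3 * m r / r - 4 * π * r ^ 2 * p₁ r := by
  intro r hr
  simp only [Set.mem_Ioi] at hr
  -- key: m r ≥ (4π/3) r³ ρ r
  have key : 4 * π / 3 * r ^ 3 * ρ r ≤ m r := by
    set g : ℝ → ℝ := fun s => m s - 4 * π / 3 * s ^ 3 * ρ r with hg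
    have hmonog : ∀ ε ∈ Set.Ioo (0:ℝ) r, g ε ≤ g r := by
      intro ε hε
      have hder : ∀ s ∈ Set.Ioo ε r,
          HasDerivAt g (4 * π * s ^ 2 * ρ s - 4 * π / 3 * (3 * s ^ 2) * ρ r) s := by
        intro s hs
        have hs0 : 0 < s := lt_trans hε.1 hs.1
        have h1 := hderiv s hs0
        have h2 : HasDerivAt (fun s : ℝ => 4 * π / 3 * s ^ 3 * ρ r)
            (4 * π / 3 * (3 * s ^ 2) * ρ r) s := by
          have := ((hasDerivAt_pow 3 s).const_mul (4 * π / 3)).mul_const (ρ r)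
          refine this.congr_deriv ?_
          norm_num
        exact h1.sub h2
      have hmo : MonotoneOn g (Set.Icc ε r) := by
        refine monotoneOn_of_deriv_nonneg (convex_Icc ε r) ?_ ?_ ?_
        · apply ContinuousOn.sub
          · exact fun s hs => ((hderiv s (lt_of_lt_of_le hε.1 hs.1)).continuousAt).continuousWithinAt
          · fun_prop
        · intro s hs
          rw [interior_Icc] at hs
          exact ((hder s hs).differentiableAt).differentiableWithinAt
        · intro s hs
          rw [interior_Icc] at hs
          rw [(hder s hs).deriv]
          have hs0 : 0 < s := lt_trans hε.1 hs.1
          have hρ : ρ r ≤ ρ s := hmono hs0 hr (le_of_lt hs.2)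
          have h4 : (0:ℝ) ≤ 4 * π * s ^ 2 := by positivity
          nlinarith [mul_le_mul_of_nonneg_left hρ h4]
      exact hmo (Set.mem_Icc.mpr ⟨le_refl ε, le_of_lt hε.2⟩)
        (Set.mem_Icc.mpr ⟨le_of_lt hε.2, le_refl r⟩) (le_of_lt hε.2)
    -- take ε → 0⁺
    have htend : Tendsto g (nhdsWithin 0 (Set.Ioi 0)) (nhds 0) := by
      have h2 : Tendsto (fun s : ℝ => 4 * π / 3 * s ^ 3 * ρ r)
          (nhdsWithin 0 (Set.Ioi 0)) (nhds 0) := by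
        have : Tendsto (fun s : ℝ => 4 * π / 3 * s ^ 3 * ρ r) (nhds 0) (nhds (4 * π / 3 * 0 ^ 3 * ρ r)) :=
          ((continuous_const.mul (continuous_pow 3)).mul continuous_const).tendsto 0
        simpa using this.mono_left nhdsWithin_le_nhds
      simpa using hlim.sub h2
    have hle : 0 ≤ g r := by
      refine le_of_tendsto htend ?_
      filter_upwards [Ioo_mem_nhdsGT_of_mem (Set.left_mem_Ico.mpr hr)] with ε hε
        using hmonog ε hε
    simpa [hg] using hle
  have hbh := hnbh r (Set.mem_Ioi.mpr hr)
  have hpr := hp r (Set.mem_Ioi.mpr hr)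
  have h1 : 4 * π * r ^ 2 * p₁ r ≤ m r / r := by
    have : 4 * π * r ^ 2 * p₁ r ≤ 4 * π / 3 * r ^ 2 * ρ r := by
      have h4 : (0:ℝ) ≤ 4 * π * r ^ 2 := by positivity
      nlinarith [mul_le_mul_of_nonneg_left hpr h4]
    calc 4 * π * r ^ 2 * p₁ r ≤ 4 * π / 3 * r ^ 2 * ρ r := this
      _ ≤ m r / r := by rw [le_div_iff₀ hr]; nlinarith
  have h2 : 3 * m r / r < 3 / 4 := by
    rw [div_lt_iff₀ hr]; linarith
  have h3 : m r / r < 1 / 4 := by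
    rw [div_lt_iff₀ hr]; linarith
  linarith
end

section
/- Let m, p, ρ : (0,∞) → ℝ with m C¹ piecewise C², satisfying the Tolman–Oppenheimer–Volkoff relation so that at any r₁ > 0 with f(r₁) = 0 one has r₁ f'(r₁) = 1 - 8πr₁²(ρ(r₁) + p(r₁)), where f(r) = 1 - 3m(r)/r - 4πr²p(r). Assume (24/7)m(r) < r and p(r) ≤ ρ(r)/3 for all r > 0, and lim_{r→∞} r²p(r) = lim_{r→∞} r²ρ(r) = 0 with lim_{r→∞} m(r)/r = 0. Then f(r) > 0 for all r > 0. -/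
open Real Filter

/-- No-photon-sphere theorem for perfect fluids: let
`f(r) = 1 - 3m(r)/r - 4πr²p(r)` be continuous on `(0,∞)`, with the TOV relation
giving `r₁ f'(r₁) = 1 - 8πr₁²(ρ(r₁) + p(r₁))` at any zero `r₁` of `f`. If
`(24/7)m(r) < r` and `p(r) ≤ ρ(r)/3` for all `r > 0`, and `r²p, r²ρ → 0` and
`m(r)/r → 0` at infinity, then `f(r) > 0` for all `r > 0`. -/
theorem stmt_16 (m p ρ : ℝ → ℝ)
    (f : ℝ → ℝ) (hf : ∀ r ∈ Set.Ioi (0 : ℝ), f r = 1 - 3 * m r / r - 4 * π * r ^ 2 * p r)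
    (hfc : ContinuousOn f (Set.Ioi 0))
    -- the TOV relation at zeros of f:
    (hTOV : ∀ r₁ ∈ Set.Ioi (0 : ℝ), f r₁ = 0 →
      ∃ f' : ℝ, HasDerivAt f f' r₁ ∧ r₁ * f' = 1 - 8 * π * r₁ ^ 2 * (ρ r₁ + p r₁))
    (hnbh : ∀ r ∈ Set.Ioi (0 : ℝ), (24 / 7) * m r < r)
    (hpρ : ∀ r ∈ Set.Ioi (0 : ℝ), p r ≤ ρ r / 3)
    (hplim : Tendsto (fun r => r ^ 2 * p r) atTop (nhds 0))
    (hρlim : Tendsto (fun r => r ^ 2 * ρ r) atTop (nhds 0))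
    (hmlim : Tendsto (fun r => m r / r) atTop (nhds 0)) :
    ∀ r ∈ Set.Ioi (0 : ℝ), 0 < f r := by
  -- f tends to 1 at infinity
  have hftop : Tendsto f atTop (nhds 1) := by
    have h1 : Tendsto (fun r : ℝ => 1 - 3 * (m r / r) - 4 * π * (r ^ 2 * p r)) atTop
        (nhds (1 - 3 * 0 - 4 * π * 0)) :=
      (tendsto_const_nhds.sub (tendsto_const_nhds.mul hmlim)).sub
        (tendsto_const_nhds.mul hplim)
    simp only [mul_zero, sub_zero] at h1
    refine h1.congr' ?_
    filter_upwards [eventually_gt_atTop (0 : ℝ)] with r hr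
    rw [hf r hr]; ring
  intro r₀ hr₀
  by_contra hneg
  push_neg at hneg
  -- find R > r₀ with f R > 0
  obtain ⟨R, hR0, hfR⟩ : ∃ R, r₀ < R ∧ 0 < f R := by
    have h2 : ∀ᶠ r in atTop, 0 < f r := hftop.eventually (eventually_gt_nhds one_pos)
    obtain ⟨R, hR1, hR2⟩ := (h2.and (eventually_gt_atTop r₀)).exists
    exact ⟨R, hR2, hR1⟩
  have hr₀R : r₀ ≤ R := hR0.le
  set S : Set ℝ := Set.Icc r₀ R ∩ f ⁻¹' Set.Iic 0 with hS
  have hsub : Set.Icc r₀ R ⊆ Set.Ioi 0 := fun x hx => lt_of_lt_of_le hr₀ hx.1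
  have hSclosed : IsClosed S :=
    (hfc.mono hsub).preimage_isClosed_of_isClosed isClosed_Icc isClosed_Iic
  have hSne : S.Nonempty := ⟨r₀, ⟨le_refl _, hr₀R⟩, hneg⟩
  have hSbdd : BddAbove S := ⟨R, fun x hx => hx.1.2⟩
  set r₁ := sSup S with hr₁def
  have hr₁S : r₁ ∈ S := hSclosed.csSup_mem hSne hSbdd
  have hr₁pos : 0 < r₁ := hsub hr₁S.1
  have hr₁R : r₁ < R := lt_of_le_of_ne hr₁S.1.2 (fun h => by
    have := hr₁S.2; rw [h] at this; exact absurd hfR (not_lt.mpr this))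
  have hr₀r₁ : r₀ ≤ r₁ := hr₁S.1.1
  -- f > 0 on (r₁, R]
  have hpos : ∀ x ∈ Set.Ioc r₁ R, 0 < f x := by
    intro x hx
    by_contra hx'
    push_neg at hx'
    have : x ∈ S := ⟨⟨le_trans hr₀r₁ hx.1.le, hx.2⟩, hx'⟩
    exact absurd (le_csSup hSbdd this) (not_le.mpr hx.1)
  -- f r₁ = 0
  have hfr₁ : f r₁ = 0 := by
    have hle : f r₁ ≤ 0 := hr₁S.2
    have hge : 0 ≤ f r₁ := by
      have hct : Tendsto f (nhdsWithin r₁ (Set.Ioi r₁)) (nhds (f r₁)) :=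
        ((hfc r₁ (hsub hr₁S.1)).mono (fun x hx => lt_trans hr₁pos hx)).tendsto
      refine ge_of_tendsto hct ?_
      filter_upwards [Ioo_mem_nhdsGT_of_mem ⟨le_refl r₁, hr₁R⟩] with x hx
      exact (hpos x ⟨hx.1, hx.2.le⟩).le
    linarith
  -- TOV at r₁ gives negative derivative
  obtain ⟨f', hd, heq⟩ := hTOV r₁ hr₁pos hfr₁
  have hf'neg : f' < 0 := by
    have hq : 3 * (m r₁ / r₁) = 1 - 4 * π * r₁ ^ 2 * p r₁ := by
      have := hf r₁ hr₁pos
      rw [hfr₁] at this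
      have h3 : 3 * m r₁ / r₁ = 3 * (m r₁ / r₁) := by ring
      linarith [this, h3.symm ▸ this]
    have hqlt : m r₁ / r₁ < 7 / 24 := by
      rw [div_lt_iff₀ hr₁pos]
      have := hnbh r₁ hr₁pos
      linarith
    have hp14 : 1 / 8 < 4 * π * r₁ ^ 2 * p r₁ := by linarith
    have hρ3 : 3 * p r₁ ≤ ρ r₁ := by linarith [hpρ r₁ hr₁pos]
    have hπ : (0 : ℝ) ≤ π * r₁ ^ 2 := by positivity
    have hsum : 1 < 8 * π * r₁ ^ 2 * (ρ r₁ + p r₁) := by nlinarith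
    have hrf : r₁ * f' < 0 := by linarith
    by_contra h
    push_neg at h
    nlinarith
  -- derivative negative at the zero r₁ forces f < 0 just to the right, contradiction
  have hslope : Tendsto (slope f r₁) (nhdsWithin r₁ {r₁}ᶜ) (nhds f') :=
    hasDerivAt_iff_tendsto_slope.mp hd
  have hmono : nhdsWithin r₁ (Set.Ioi r₁) ≤ nhdsWithin r₁ {r₁}ᶜ :=
    nhdsWithin_mono _ (fun x hx => ne_of_gt hx)
  have h1 : slope f r₁ ⁻¹' Set.Iio 0 ∈ nhdsWithin r₁ (Set.Ioi r₁) :=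
    (hslope.mono_left hmono) (Iio_mem_nhds hf'neg)
  have h2 : Set.Ioo r₁ R ∈ nhdsWithin r₁ (Set.Ioi r₁) :=
    Ioo_mem_nhdsGT_of_mem ⟨le_refl r₁, hr₁R⟩
  obtain ⟨x, hx1, hx2⟩ := Filter.nonempty_of_mem (Filter.inter_mem h1 h2)
  have hxslope : slope f r₁ x < 0 := hx1
  rw [slope_def_field] at hxslope
  have hxr : 0 < x - r₁ := sub_pos.mpr hx2.1
  have hfx : f x < 0 := by
    rw [hfr₁, sub_zero] at hxslope
    have := (div_neg_iff.mp hxslope)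
    rcases this with ⟨ha, hb⟩ | ⟨ha, hb⟩
    · linarith
    · exact ha
  exact absurd (hpos x ⟨hx2.1, hx2.2.le⟩) (not_lt.mpr hfx.le)
end

section
/- Let f : (0,∞) → ℝ be continuous and piecewise C¹ with lim_{r→∞} f(r) = 1. Suppose that at every point r₁ where f(r₁) = 0 the one-sided derivatives of f are strictly negative. Then f(r) > 0 for all r > 0. -/
open Real Filter

/-- Abstract real-analysis lemma: a continuous function `f : (0,∞) → ℝ` tending
to `1` at infinity, whose one-sided derivatives exist and are strictly negative at
every zero, is everywhere positive. -/
theorem stmt_17 (f : ℝ → ℝ)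
    (hfc : ContinuousOn f (Set.Ioi 0))
    (hflim : Tendsto f atTop (nhds 1))
    (hzero : ∀ r₁ ∈ Set.Ioi (0 : ℝ), f r₁ = 0 →
      (∃ d : ℝ, HasDerivWithinAt f d (Set.Ici r₁) r₁ ∧ d < 0) ∧
      (∃ d : ℝ, HasDerivWithinAt f d (Set.Iic r₁) r₁ ∧ d < 0)) :
    ∀ r ∈ Set.Ioi (0 : ℝ), 0 < f r := by
  intro r hr
  by_contra hle
  push_neg at hle
  -- find R > r with f R > 0
  have hev : ∀ᶠ x in atTop, 0 < f x :=
    hflim.eventually (eventually_gt_nhds (by norm_num))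
  obtain ⟨N, hN⟩ := hev.exists_forall_of_atTop
  set R : ℝ := max N (r + 1) with hRdef
  have hrR : r < R := lt_of_lt_of_le (by linarith) (le_max_right _ _)
  have hfR : 0 < f R := hN R (le_max_left _ _)
  have hr0 : (0:ℝ) < r := hr
  have hsub : Set.Icc r R ⊆ Set.Ioi 0 := fun x hx => lt_of_lt_of_le hr0 hx.1
  have hfcI : ContinuousOn f (Set.Icc r R) := hfc.mono hsub
  -- the set of nonpositive points in [r, R]
  set S : Set ℝ := {x ∈ Set.Icc r R | f x ≤ 0} with hSdef
  have hSne : S.Nonempty := ⟨r, ⟨le_refl _, hrR.le⟩, hle⟩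
  have hSclosed : IsClosed S := by
    have : S = Set.Icc r R ∩ f ⁻¹' Set.Iic 0 := by
      ext x; simp [hSdef, Set.mem_setOf_eq, Set.mem_preimage, Set.mem_Iic, and_comm]
    rw [this]
    exact (hfcI.preimage_isClosed_of_isClosed isClosed_Icc isClosed_Iic)
  have hScomp : IsCompact S :=
    isCompact_Icc.of_isClosed_subset hSclosed (fun x hx => hx.1)
  obtain ⟨r₁, hr₁S, hr₁sup⟩ := hScomp.exists_isGreatest hSne
  obtain ⟨⟨hr₁r, hr₁R⟩, hfr₁⟩ := hr₁S
  have hr₁pos : (0:ℝ) < r₁ := lt_of_lt_of_le hr0 hr₁r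
  have hr₁ltR : r₁ < R := lt_of_le_of_ne hr₁R (by rintro rfl; linarith)
  -- f is positive strictly to the right of r₁ in (r₁, R]
  have hpos : ∀ x, r₁ < x → x ≤ R → 0 < f x := by
    intro x hx hxR
    by_contra h
    push_neg at h
    have : x ∈ S := ⟨⟨le_trans hr₁r hx.le, hxR⟩, h⟩
    exact absurd (hr₁sup this) (not_le.mpr hx)
  -- f r₁ = 0
  have hfr₁0 : f r₁ = 0 := by
    rcases lt_or_eq_of_le hfr₁ with hlt | heq
    · exfalso
      have hcont : ContinuousAt f r₁ :=
        hfc.continuousAt (isOpen_Ioi.mem_nhds hr₁pos)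
      have hneg : ∀ᶠ x in nhdsWithin r₁ (Set.Ioi r₁), f x < 0 :=
        eventually_nhdsWithin_of_eventually_nhds
          (hcont.eventually (eventually_lt_nhds hlt))
      have hltR' : ∀ᶠ x in nhdsWithin r₁ (Set.Ioi r₁), x < R :=
        eventually_nhdsWithin_of_eventually_nhds (eventually_lt_nhds hr₁ltR)
      have hne : (nhdsWithin r₁ (Set.Ioi r₁)).NeBot := nhdsGT_neBot r₁
      obtain ⟨x, hxneg, hxR, hxmem⟩ := (hneg.and (hltR'.and self_mem_nhdsWithin)).exists
      exact absurd (hpos x hxmem hxR.le) (not_lt.mpr hxneg.le)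
    · exact heq
  -- right derivative negative
  obtain ⟨⟨d, hd, hdneg⟩, -⟩ := hzero r₁ hr₁pos hfr₁0
  rw [hasDerivWithinAt_iff_tendsto_slope] at hd
  have hset : Set.Ici r₁ \ {r₁} = Set.Ioi r₁ := Set.Ici_sdiff_left
  rw [hset] at hd
  have hslope : ∀ᶠ x in nhdsWithin r₁ (Set.Ioi r₁), slope f r₁ x < 0 :=
    hd.eventually (eventually_lt_nhds hdneg)
  have hltR : ∀ᶠ x in nhdsWithin r₁ (Set.Ioi r₁), x < R :=
    eventually_nhdsWithin_of_eventually_nhds (eventually_lt_nhds hr₁ltR)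
  have hne : (nhdsWithin r₁ (Set.Ioi r₁)).NeBot := nhdsGT_neBot r₁
  obtain ⟨x, hs, hR', hx⟩ := (hslope.and (hltR.and self_mem_nhdsWithin)).exists
  have hxgt : r₁ < x := hx
  have hx0 : 0 < x - r₁ := sub_pos.mpr hxgt
  have hfx : f x < 0 := by
    by_contra h
    push_neg at h
    have : (0:ℝ) ≤ slope f r₁ x := by
      rw [slope_def_field, hfr₁0, sub_zero]
      exact div_nonneg h hx0.le
    exact absurd hs (not_lt.mpr this)
  exact absurd (hpos x hxgt hR'.le) (not_lt.mpr hfx.le)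
end

section
/- For the Schwarzschild interior solution with constant density ρ₀ > 0, matter radius R, and mass function m(r) = (4π/3)ρ₀r³ for 0 ≤ r ≤ R, m(r) = m(R) for r ≥ R, and pressure p(r) = ρ₀(u(r)-1)/(3-u(r)) for r ≤ R (with u(r) = ((3 - 8πρ₀r²)/(3 - 8πρ₀R²))^{1/2}), p(r) = 0 for r ≥ R: the function f(r) = 1 - 3m(r)/r - 4πr²p(r) equals 1 - 8πρ₀r²/(3 - u(r)) for 0 < r ≤ R and 1 - 3m(R)/r for r ≥ R. Consequently, if m(R)/R < 1/3 then f(r) > 0 for all r > 0; if 1/3 < m(R)/R < 4/9 then f has exactly two zeros, one at r = 3m(R) > R and one at r = ((1 - 3πρ₀R²)/(πρ₀(3 - 8πρ₀R²)))^{1/2} < R. -/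
open Real

set_option maxHeartbeats 2000000 in
/-- Schwarzschild interior solution with constant density `ρ₀ > 0` and matter
radius `R` (with `m(R)/R < 4/9`): the photon-sphere function
`f(r) = 1 - 3m(r)/r - 4πr²p(r)` equals `1 - 8πρ₀r²/(3 - u(r))` for `0 < r ≤ R`
and `1 - 3m(R)/r` for `r ≥ R`. If `m(R)/R < 1/3` then `f > 0` everywhere
(no photon spheres); if `1/3 < m(R)/R < 4/9` then `f` has exactly two zeros,
one at `r = 3m(R) > R` and one at
`r = ((1 - 3πρ₀R²)/(πρ₀(3 - 8πρ₀R²)))^{1/2} < R`. -/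
theorem stmt_18 (ρ₀ R : ℝ) (hρ₀ : 0 < ρ₀) (hR : 0 < R)
    (hstable : 8 * π * ρ₀ * R ^ 2 < 8 / 3) :
    let mR : ℝ := (4 * π / 3) * ρ₀ * R ^ 3
    let u : ℝ → ℝ := fun r => Real.sqrt ((3 - 8 * π * ρ₀ * r ^ 2) / (3 - 8 * π * ρ₀ * R ^ 2))
    let m : ℝ → ℝ := fun r => if r ≤ R then (4 * π / 3) * ρ₀ * r ^ 3 else mR
    let p : ℝ → ℝ := fun r => if r ≤ R then ρ₀ * (u r - 1) / (3 - u r) else 0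
    let f : ℝ → ℝ := fun r => 1 - 3 * m r / r - 4 * π * r ^ 2 * p r
    (∀ r ∈ Set.Ioc (0 : ℝ) R, f r = 1 - 8 * π * ρ₀ * r ^ 2 / (3 - u r)) ∧
    (∀ r : ℝ, R ≤ r → 0 < r → f r = 1 - 3 * mR / r) ∧
    (mR / R < 1 / 3 → ∀ r ∈ Set.Ioi (0 : ℝ), 0 < f r) ∧
    (1 / 3 < mR / R →
      {r ∈ Set.Ioi (0 : ℝ) | f r = 0}
        = {3 * mR, Real.sqrt ((1 - 3 * π * ρ₀ * R ^ 2) / (π * ρ₀ * (3 - 8 * π * ρ₀ * R ^ 2)))} ∧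
      R < 3 * mR ∧
      Real.sqrt ((1 - 3 * π * ρ₀ * R ^ 2) / (π * ρ₀ * (3 - 8 * π * ρ₀ * R ^ 2))) < R) := by
  have hπ : (0:ℝ) < π := Real.pi_pos
  have hπρ : 0 < π * ρ₀ := mul_pos hπ hρ₀
  intro mR u m p f
  have hmR : mR = (4 * π / 3) * ρ₀ * R ^ 3 := rfl
  have hu : ∀ r : ℝ, u r = Real.sqrt ((3 - 8 * π * ρ₀ * r ^ 2) / (3 - 8 * π * ρ₀ * R ^ 2)) :=
    fun _ => rfl
  have hm : ∀ r : ℝ, m r = if r ≤ R then (4 * π / 3) * ρ₀ * r ^ 3 else mR := fun _ => rfl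
  have hp : ∀ r : ℝ, p r = if r ≤ R then ρ₀ * (u r - 1) / (3 - u r) else 0 := fun _ => rfl
  have hf : ∀ r : ℝ, f r = 1 - 3 * m r / r - 4 * π * r ^ 2 * p r := fun _ => rfl
  have hd0 : 0 < 3 - 8 * π * ρ₀ * R ^ 2 := by nlinarith
  -- bounds on u on [0, R]
  have hx : ∀ r : ℝ, r ≤ R → 0 ≤ r → 3 - 8 * π * ρ₀ * R ^ 2 ≤ 3 - 8 * π * ρ₀ * r ^ 2 := by
    intro r hrR hr0
    have h2 : r ^ 2 ≤ R ^ 2 := pow_le_pow_left₀ hr0 hrR 2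
    nlinarith [mul_le_mul_of_nonneg_left h2 hπρ.le]
  have hu1 : ∀ r : ℝ, r ≤ R → 0 ≤ r → 1 ≤ u r := by
    intro r hrR hr0
    rw [hu r]
    rw [show (1:ℝ) = Real.sqrt 1 from Real.sqrt_one.symm]
    apply Real.sqrt_le_sqrt
    rw [le_div_iff₀ hd0]
    simpa using hx r hrR hr0
  have hu3 : ∀ r : ℝ, r ≤ R → 0 ≤ r → u r < 3 := by
    intro r hrR hr0
    rw [hu r]
    apply (Real.sqrt_lt' (by norm_num)).2
    rw [div_lt_iff₀ hd0]
    nlinarith [mul_nonneg hπρ.le (sq_nonneg r)]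
  have h3u : ∀ r : ℝ, r ≤ R → 0 ≤ r → 0 < 3 - u r := by
    intro r hrR hr0; linarith [hu3 r hrR hr0]
  -- Part 1
  have part1 : ∀ r ∈ Set.Ioc (0 : ℝ) R, f r = 1 - 8 * π * ρ₀ * r ^ 2 / (3 - u r) := by
    rintro r ⟨hr0, hrR⟩
    have h3 := h3u r hrR hr0.le
    have h3ne : 3 - u r ≠ 0 := ne_of_gt h3
    have hrne : r ≠ 0 := ne_of_gt hr0
    rw [hf r, hm r, hp r, if_pos hrR, if_pos hrR]
    field_simp
    ring
  -- Part 2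
  have part2 : ∀ r : ℝ, R ≤ r → 0 < r → f r = 1 - 3 * mR / r := by
    intro r hRr hr0
    by_cases hrR : r ≤ R
    · have heq : r = R := le_antisymm hrR hRr
      subst heq
      have huR : u r = 1 := by
        rw [hu r, div_self (ne_of_gt hd0), Real.sqrt_one]
      rw [hf r, hm r, hp r, if_pos le_rfl, if_pos le_rfl, huR, hmR]
      ring
    · rw [hf r, hm r, hp r, if_neg hrR, if_neg hrR]
      ring
  -- Part 3
  have part3 : mR / R < 1 / 3 → ∀ r ∈ Set.Ioi (0 : ℝ), 0 < f r := by
    intro hlt r hr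
    simp only [Set.mem_Ioi] at hr
    have hc : 8 * π * ρ₀ * R ^ 2 < 2 := by
      rw [hmR, div_lt_iff₀ hR] at hlt
      nlinarith
    by_cases hrR : r ≤ R
    · rw [part1 r ⟨hr, hrR⟩]
      have h3 := h3u r hrR hr.le
      have hxr := hx r hrR hr.le
      -- need 8πρ₀r² < 3 - u r, i.e. u r < 3 - 8πρ₀r²
      have hxpos : 0 < 3 - 8 * π * ρ₀ * r ^ 2 := by linarith
      have hult : u r < 3 - 8 * π * ρ₀ * r ^ 2 := by
        rw [hu r]
        apply (Real.sqrt_lt' hxpos).2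
        rw [div_lt_iff₀ hd0]
        nlinarith
      have : 8 * π * ρ₀ * r ^ 2 / (3 - u r) < 1 := by
        rw [div_lt_one h3]; linarith
      linarith
    · push_neg at hrR
      rw [part2 r hrR.le hr]
      have hmRpos : 0 < mR := by rw [hmR]; positivity
      have h3mR : 3 * mR < R := by rw [hmR]; nlinarith
      have : 3 * mR / r < 1 := by
        rw [div_lt_one hr]; linarith
      linarith
  -- Part 4
  refine ⟨part1, part2, part3, ?_⟩
  intro hgt
  set s : ℝ := (1 - 3 * π * ρ₀ * R ^ 2) / (π * ρ₀ * (3 - 8 * π * ρ₀ * R ^ 2)) with hs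
  have hc2 : 2 < 8 * π * ρ₀ * R ^ 2 := by
    rw [hmR, lt_div_iff₀ hR] at hgt
    nlinarith
  have hnum : 0 < 1 - 3 * π * ρ₀ * R ^ 2 := by nlinarith
  have hden : 0 < π * ρ₀ * (3 - 8 * π * ρ₀ * R ^ 2) := mul_pos hπρ hd0
  have hspos : 0 < s := div_pos hnum hden
  have hr₁pos : 0 < Real.sqrt s := Real.sqrt_pos.2 hspos
  have hr₁sq : Real.sqrt s ^ 2 = s := Real.sq_sqrt hspos.le
  have hsltR : s < R ^ 2 := by
    rw [hs, div_lt_iff₀ hden]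
    nlinarith [mul_pos (by nlinarith : (0:ℝ) < 8 * π * ρ₀ * R ^ 2 - 2)
      (by nlinarith : (0:ℝ) < 1 - 2 * π * ρ₀ * R ^ 2)]
  have hr₁R : Real.sqrt s < R := by
    have := Real.sqrt_lt_sqrt hspos.le hsltR
    rwa [Real.sqrt_sq hR.le] at this
  have hRmR : R < 3 * mR := by rw [hmR]; nlinarith
  have hmRpos : 0 < mR := by rw [hmR]; positivity
  -- f (sqrt s) = 0
  have hur₁ : u (Real.sqrt s) = 1 / (3 - 8 * π * ρ₀ * R ^ 2) := by
    rw [hu, hr₁sq]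
    have harg : (3 - 8 * π * ρ₀ * s) / (3 - 8 * π * ρ₀ * R ^ 2)
        = (1 / (3 - 8 * π * ρ₀ * R ^ 2)) ^ 2 := by
      rw [hs]
      field_simp
      ring
    rw [harg, Real.sqrt_sq (by positivity)]
  have h1 : (0:ℝ) < 3 - 1 / (3 - 8 * π * ρ₀ * R ^ 2) := by
    rw [sub_pos, div_lt_iff₀ hd0]; nlinarith
  have key : 8 * π * ρ₀ * s = 3 - 1 / (3 - 8 * π * ρ₀ * R ^ 2) := by
    rw [hs]; field_simp; ring
  have hfr₁ : f (Real.sqrt s) = 0 := by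
    rw [part1 (Real.sqrt s) ⟨hr₁pos, hr₁R.le⟩, hur₁, hr₁sq, key,
      div_self (ne_of_gt h1)]
    norm_num
  have hfout : f (3 * mR) = 0 := by
    rw [part2 (3 * mR) (by linarith) (by linarith)]
    field_simp
    norm_num
  refine ⟨?_, hRmR, hr₁R⟩
  ext r
  simp only [Set.mem_setOf_eq, Set.mem_Ioi, Set.mem_insert_iff, Set.mem_singleton_iff]
  constructor
  · rintro ⟨hr0, hfr⟩
    by_cases hrR : r ≤ R
    · right
      rw [part1 r ⟨hr0, hrR⟩] at hfr
      have h3 := h3u r hrR hr0.le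
      have hxr := hx r hrR hr0.le
      have heq : 8 * π * ρ₀ * r ^ 2 = 3 - u r := by
        have : 8 * π * ρ₀ * r ^ 2 / (3 - u r) = 1 := by linarith
        field_simp at this
        linarith
      have hux : u r = 3 - 8 * π * ρ₀ * r ^ 2 := by linarith
      have husq : u r ^ 2 = (3 - 8 * π * ρ₀ * r ^ 2) / (3 - 8 * π * ρ₀ * R ^ 2) := by
        rw [hu]
        exact Real.sq_sqrt (div_nonneg (by linarith) hd0.le)
      -- x² = x/d with x > 0 gives x = 1/d
      have hxpos : 0 < 3 - 8 * π * ρ₀ * r ^ 2 := by linarith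
      have hX : (3 - 8 * π * ρ₀ * r ^ 2) * (3 - 8 * π * ρ₀ * R ^ 2) = 1 := by
        rw [hux] at husq
        field_simp at husq
        nlinarith [husq]
      have hrsq : r ^ 2 = s := by
        rw [hs, eq_div_iff (ne_of_gt hden)]
        nlinarith [hX]
      have : r = Real.sqrt s := by
        rw [← hrsq, Real.sqrt_sq hr0.le]
      exact this
    · left
      push_neg at hrR
      rw [part2 r hrR.le hr0] at hfr
      have : 3 * mR / r = 1 := by linarith
      rw [div_eq_one_iff_eq (ne_of_gt hr0)] at this
      exact this.symm
  · rintro (rfl | rfl)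
    · exact ⟨by linarith, hfout⟩
    · exact ⟨hr₁pos, hfr₁⟩
end

section
/- For the Schwarzschild interior solution, the energy condition 0 ≤ p(r) ≤ ρ₀/3 for all r ∈ [0, R] holds if and only if m(R)/R ≤ 5/18; and the central pressure satisfies p(0) ≥ ρ₀/√3 whenever m(R)/R ≥ 1/3. -/
open Real

set_option maxHeartbeats 1000000

/-- Schwarzschild interior solution with constant density `ρ₀ > 0`, radius `R`,
`m(R)/R < 4/9`: the energy condition `0 ≤ p(r) ≤ ρ₀/3` on `[0,R]` holds iff
`m(R)/R ≤ 5/18`, and the central pressure satisfies `p(0) ≥ ρ₀/√3` whenever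
`m(R)/R ≥ 1/3`. -/
theorem stmt_19 (ρ₀ R : ℝ) (hρ₀ : 0 < ρ₀) (hR : 0 < R)
    (hstable : 8 * π * ρ₀ * R ^ 2 < 8 / 3) :
    let mR : ℝ := (4 * π / 3) * ρ₀ * R ^ 3
    let u : ℝ → ℝ := fun r => Real.sqrt ((3 - 8 * π * ρ₀ * r ^ 2) / (3 - 8 * π * ρ₀ * R ^ 2))
    let p : ℝ → ℝ := fun r => ρ₀ * (u r - 1) / (3 - u r)
    ((∀ r ∈ Set.Icc (0 : ℝ) R, 0 ≤ p r ∧ p r ≤ ρ₀ / 3) ↔ mR / R ≤ 5 / 18) ∧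
    (1 / 3 ≤ mR / R → ρ₀ / Real.sqrt 3 ≤ p 0) := by
  intro mR u p
  have hπ : (0:ℝ) < π := Real.pi_pos
  have hA : 0 < 8 * π * ρ₀ := by positivity
  have hAR : 0 < 8 * π * ρ₀ * R ^ 2 := by positivity
  have hD : (1:ℝ)/3 < 3 - 8 * π * ρ₀ * R ^ 2 := by nlinarith
  have hD0 : (0:ℝ) < 3 - 8 * π * ρ₀ * R ^ 2 := by linarith
  have hmem0 : (0:ℝ) ∈ Set.Icc (0:ℝ) R := ⟨le_refl 0, hR.le⟩
  have hmR : mR / R = 8 * π * ρ₀ * R ^ 2 / 6 := by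
    show (4 * π / 3) * ρ₀ * R ^ 3 / R = _
    field_simp; ring
  have hu1 : ∀ r ∈ Set.Icc (0:ℝ) R, 1 ≤ u r := by
    intro r hr
    have hr2 : r ^ 2 ≤ R ^ 2 := by nlinarith [hr.1, hr.2]
    have h1 : 8 * π * ρ₀ * r ^ 2 ≤ 8 * π * ρ₀ * R ^ 2 :=
      mul_le_mul_of_nonneg_left hr2 hA.le
    have h2 : (1:ℝ) ≤ (3 - 8 * π * ρ₀ * r ^ 2) / (3 - 8 * π * ρ₀ * R ^ 2) := by
      rw [le_div_iff₀ hD0]; linarith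
    calc (1:ℝ) = Real.sqrt 1 := by simp
    _ ≤ u r := Real.sqrt_le_sqrt h2
  have hu3 : ∀ r ∈ Set.Icc (0:ℝ) R, u r < 3 := by
    intro r hr
    have h0 : 0 ≤ 8 * π * ρ₀ * r ^ 2 := by positivity
    have h2 : (3 - 8 * π * ρ₀ * r ^ 2) / (3 - 8 * π * ρ₀ * R ^ 2) < 9 := by
      rw [div_lt_iff₀ hD0]; nlinarith
    exact (Real.sqrt_lt' (by norm_num)).mpr (by nlinarith)
  have hu0le : ∀ r ∈ Set.Icc (0:ℝ) R, u r ≤ u 0 := by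
    intro r hr
    apply Real.sqrt_le_sqrt
    have h0 : 0 ≤ 8 * π * ρ₀ * r ^ 2 := by positivity
    have h1 : (3 - 8 * π * ρ₀ * r ^ 2) ≤ (3 - 8 * π * ρ₀ * (0:ℝ) ^ 2) := by
      norm_num; exact h0
    exact (div_le_div_iff_of_pos_right hD0).mpr h1
  have hu0sq : u 0 ^ 2 = 3 / (3 - 8 * π * ρ₀ * R ^ 2) := by
    show Real.sqrt ((3 - 8 * π * ρ₀ * (0:ℝ) ^ 2) / (3 - 8 * π * ρ₀ * R ^ 2)) ^ 2 = _
    rw [Real.sq_sqrt (div_nonneg (by norm_num) hD0.le)]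
    norm_num
  constructor
  · constructor
    · -- forward: energy condition ⇒ mR/R ≤ 5/18
      intro H
      have hp0 := (H 0 hmem0).2
      have hu01 := hu1 0 hmem0
      have hu03 := hu3 0 hmem0
      -- p 0 ≤ ρ₀/3 gives u 0 ≤ 3/2
      have hu0 : u 0 ≤ 3/2 := by
        by_contra hcon
        push_neg at hcon
        have : ρ₀ * (u 0 - 1) / (3 - u 0) > ρ₀ / 3 := by
          rw [gt_iff_lt, div_lt_div_iff₀ (by norm_num) (by linarith)]
          nlinarith
        exact absurd hp0 (not_le.mpr this)
      have : 3 / (3 - 8 * π * ρ₀ * R ^ 2) ≤ 9/4 := by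
        rw [← hu0sq]; nlinarith [hu1 0 hmem0]
      rw [hmR]
      rw [div_le_iff₀ hD0] at this
      linarith
    · -- backward
      intro H
      rw [hmR] at H
      have hD43 : (4:ℝ)/3 ≤ 3 - 8 * π * ρ₀ * R ^ 2 := by linarith
      have hu0 : u 0 ≤ 3/2 := by
        have h1 : 3 / (3 - 8 * π * ρ₀ * R ^ 2) ≤ 9/4 := by
          rw [div_le_iff₀ hD0]; linarith
        have h2 : 0 ≤ u 0 := Real.sqrt_nonneg _
        nlinarith [hu0sq, sq_nonneg (u 0 - 3/2)]
      intro r hr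
      have h1 := hu1 r hr
      have h3 : u r ≤ 3/2 := le_trans (hu0le r hr) hu0
      constructor
      · apply div_nonneg _ (by linarith)
        nlinarith
      · rw [div_le_div_iff₀ (by linarith) (by norm_num)]
        nlinarith
  · -- second part
    intro H
    rw [hmR] at H
    have hs3 : Real.sqrt 3 ^ 2 = 3 := Real.sq_sqrt (by norm_num)
    have hs3pos : 0 < Real.sqrt 3 := Real.sqrt_pos.mpr (by norm_num)
    have hs3lt : Real.sqrt 3 < 3 := by nlinarith
    have hu0ge : Real.sqrt 3 ≤ u 0 := by
      have h1 : (3:ℝ) ≤ (3 - 8 * π * ρ₀ * (0:ℝ) ^ 2) / (3 - 8 * π * ρ₀ * R ^ 2) := by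
        rw [le_div_iff₀ hD0]; nlinarith
      exact Real.sqrt_le_sqrt h1
    have hu03 := hu3 0 hmem0
    show ρ₀ / Real.sqrt 3 ≤ ρ₀ * (u 0 - 1) / (3 - u 0)
    rw [div_le_div_iff₀ hs3pos (by linarith : (0:ℝ) < 3 - u 0)]
    nlinarith [mul_nonneg hρ₀.le (mul_nonneg (sub_nonneg.2 hu0ge) (by linarith : (0:ℝ) ≤ Real.sqrt 3 + 1)), hs3]
end
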